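/- If G is a disconnected graph containing at least one edge and G is a universal fixer, then every connected component of G is a universal fixer. -/

import Mathlib

open SimpleGraph

variable {V : Type*}

/-- `A` dominates `B`: every vertex of `B` is in the closed neighborhood of some vertex of `A`. -/
def Dominates (G : SimpleGraph V) (A B : Set V) : Prop :=
  ∀ b ∈ B, ∃ a ∈ A, a = b ∨ G.Adj a b

/-- `D` is a dominating set of `G`. -/
def IsDomSet (G : SimpleGraph V) (D : Set V) : Prop :=
  Dominates G D Set.univ

/-- The domination number of `G`. -/
noncomputable def domNum (G : SimpleGraph V) : ℕ :=
  sInf {n | ∃ D : Set V, IsDomSet G D ∧ D.ncard = n}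

/-- The prism of `G` with respect to a permutation `π`: two disjoint copies of `G`
joined by the perfect matching `u – π u`. -/
def prism (G : SimpleGraph V) (π : Equiv.Perm V) : SimpleGraph (V ⊕ V) :=
  SimpleGraph.fromRel (fun a b =>
    match a, b with
    | Sum.inl u, Sum.inl v => G.Adj u v
    | Sum.inr u, Sum.inr v => G.Adj u v
    | Sum.inl u, Sum.inr v => v = π u
    | Sum.inr _, Sum.inl _ => False)

/-- `G` is a universal fixer. -/
def IsUniversalFixer (G : SimpleGraph V) : Prop :=
  ∀ π : Equiv.Perm V, domNum (prism G π) = domNum G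

/-- `D` is a γ-set (minimum dominating set) of `G`. -/
def IsGammaSet (G : SimpleGraph V) (D : Set V) : Prop :=
  IsDomSet G D ∧ D.ncard = domNum G

/-- `D = [D₁, D₂]` is a symmetric γ-set of `G`. -/
def IsSymGammaSet (G : SimpleGraph V) (D D1 D2 : Set V) : Prop :=
  IsGammaSet G D ∧ D = D1 ∪ D2 ∧ Disjoint D1 D2 ∧ D1.Nonempty ∧ D2.Nonempty ∧
    Dominates G D1 (Set.univ \ D2) ∧ Dominates G D2 (Set.univ \ D1)

/-- `S` is a 2-packing: closed neighborhoods of distinct vertices of `S` are disjoint. -/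
def IsTwoPacking (G : SimpleGraph V) (S : Set V) : Prop :=
  ∀ x ∈ S, ∀ y ∈ S, x ≠ y →
    Disjoint (insert x (G.neighborSet x)) (insert y (G.neighborSet y))

/-- `D` is an even symmetric γ-set of `G`. -/
def IsEvenSymGammaSet (G : SimpleGraph V) (D : Set V) : Prop :=
  ∃ D1 D2, IsSymGammaSet G D D1 D2 ∧ D1.ncard = D2.ncard

lemma isDomSet_univ (G : SimpleGraph V) : IsDomSet G Set.univ :=
  fun b _ => ⟨b, trivial, Or.inl rfl⟩

lemma exists_isGammaSet (G : SimpleGraph V) : ∃ D, IsGammaSet G D :=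
  Nat.sInf_mem (s := {n | ∃ D : Set V, IsDomSet G D ∧ D.ncard = n})
    ⟨_, Set.univ, isDomSet_univ G, rfl⟩

lemma domNum_le_ncard {G : SimpleGraph V} {D : Set V} (hD : IsDomSet G D) :
    domNum G ≤ D.ncard :=
  Nat.sInf_le ⟨D, hD, rfl⟩

lemma IsDomSet.image_iso {W : Type*} {G : SimpleGraph V} {H : SimpleGraph W} (e : G ≃g H)
    {D : Set V} (hD : IsDomSet G D) : IsDomSet H (e '' D) := by
  intro b _
  obtain ⟨a, haD, rfl | hab⟩ := hD (e.symm b) trivial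
  · exact ⟨e (e.symm b), Set.mem_image_of_mem e haD, Or.inl (e.apply_symm_apply b)⟩
  · exact ⟨e a, Set.mem_image_of_mem e haD, Or.inr (by simpa using e.map_adj_iff.2 hab)⟩

lemma domNum_le_of_iso {W : Type*} {G : SimpleGraph V} {H : SimpleGraph W} (e : G ≃g H) :
    domNum H ≤ domNum G := by
  obtain ⟨D, hD, hcard⟩ := exists_isGammaSet G
  calc domNum H ≤ (e '' D).ncard := domNum_le_ncard (hD.image_iso e)
    _ = domNum G := by rw [Set.ncard_image_of_injective D e.injective, hcard]

lemma domNum_congr {W : Type*} {G : SimpleGraph V} {H : SimpleGraph W} (e : G ≃g H) :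
    domNum G = domNum H :=
  le_antisymm (domNum_le_of_iso e.symm) (domNum_le_of_iso e)

section Prism

variable {G : SimpleGraph V} {π : Equiv.Perm V} {u v : V}

@[simp]
lemma prism_adj_inl_inl : (prism G π).Adj (Sum.inl u) (Sum.inl v) ↔ G.Adj u v := by
  simp only [prism, fromRel_adj, ne_eq, Sum.inl.injEq]
  exact ⟨fun ⟨_, h⟩ => h.elim id (·.symm), fun h => ⟨h.ne, Or.inl h⟩⟩

@[simp]
lemma prism_adj_inr_inr : (prism G π).Adj (Sum.inr u) (Sum.inr v) ↔ G.Adj u v := by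
  simp only [prism, fromRel_adj, ne_eq, Sum.inr.injEq]
  exact ⟨fun ⟨_, h⟩ => h.elim id (·.symm), fun h => ⟨h.ne, Or.inl h⟩⟩

@[simp]
lemma prism_adj_inl_inr : (prism G π).Adj (Sum.inl u) (Sum.inr v) ↔ v = π u := by
  simp [prism]

@[simp]
lemma prism_adj_inr_inl : (prism G π).Adj (Sum.inr u) (Sum.inl v) ↔ u = π v := by
  simp [prism]

end Prism

/-- A dominating set of `πG` projects onto one of `G`: a vertex of the second copy dominating
`inl b` can only be `inr (π b)`, which is sent back to `b`. -/
lemma domNum_le_domNum_prism [Finite V] (G : SimpleGraph V) (π : Equiv.Perm V) :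
    domNum G ≤ domNum (prism G π) := by
  obtain ⟨D, hD, hcard⟩ := exists_isGammaSet (prism G π)
  have hdom : IsDomSet G (Sum.elim id π.symm '' D) := by
    intro b _
    obtain ⟨a | a, haD, hab⟩ := hD (Sum.inl b) trivial
    · refine ⟨a, ⟨_, haD, rfl⟩, ?_⟩
      simpa using hab
    · obtain rfl : a = π b := by simpa using hab
      exact ⟨b, ⟨_, haD, by simp⟩, Or.inl rfl⟩
  calc domNum G ≤ (Sum.elim id π.symm '' D).ncard := domNum_le_ncard hdom
    _ ≤ D.ncard := Set.ncard_image_le (Set.toFinite D)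
    _ = domNum (prism G π) := hcard

section UnionOfComponents

variable {G : SimpleGraph V} {S : Set V}

lemma IsDomSet.preimage_val (hS : ∀ ⦃u v⦄, G.Adj u v → (u ∈ S ↔ v ∈ S)) {D : Set V}
    (hD : IsDomSet G D) : IsDomSet (G.induce S) (Subtype.val ⁻¹' D) := by
  rintro ⟨v, hv⟩ -
  obtain ⟨a, haD, rfl | hav⟩ := hD v trivial
  · exact ⟨⟨a, hv⟩, haD, Or.inl rfl⟩
  · exact ⟨⟨a, (hS hav).2 hv⟩, haD, Or.inr hav⟩

lemma IsDomSet.image_val_union {D₁ : Set S} {D₂ : Set ↥Sᶜ} (hD₁ : IsDomSet (G.induce S) D₁)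
    (hD₂ : IsDomSet (G.induce Sᶜ) D₂) : IsDomSet G (Subtype.val '' D₁ ∪ Subtype.val '' D₂) := by
  intro v _
  by_cases hv : v ∈ S
  · obtain ⟨a, ha, hav⟩ := hD₁ ⟨v, hv⟩ trivial
    exact ⟨a, Or.inl ⟨a, ha, rfl⟩, hav.imp (congrArg Subtype.val) id⟩
  · obtain ⟨a, ha, hav⟩ := hD₂ ⟨v, hv⟩ trivial
    exact ⟨a, Or.inr ⟨a, ha, rfl⟩, hav.imp (congrArg Subtype.val) id⟩

lemma domNum_le_add_domNum_induce_compl :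
    domNum G ≤ domNum (G.induce S) + domNum (G.induce Sᶜ) := by
  obtain ⟨D₁, hD₁, hcard₁⟩ := exists_isGammaSet (G.induce S)
  obtain ⟨D₂, hD₂, hcard₂⟩ := exists_isGammaSet (G.induce Sᶜ)
  calc domNum G ≤ (Subtype.val '' D₁ ∪ Subtype.val '' D₂).ncard :=
        domNum_le_ncard (hD₁.image_val_union hD₂)
    _ ≤ (Subtype.val '' D₁).ncard + (Subtype.val '' D₂).ncard := Set.ncard_union_le _ _
    _ = domNum (G.induce S) + domNum (G.induce Sᶜ) := by
      rw [Set.ncard_image_of_injective _ Subtype.val_injective,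
        Set.ncard_image_of_injective _ Subtype.val_injective, hcard₁, hcard₂]

lemma ncard_preimage_val (S D : Set V) : (Subtype.val ⁻¹' D : Set S).ncard = (D ∩ S).ncard := by
  rw [← Set.ncard_image_of_injective _ Subtype.val_injective, Subtype.image_preimage_val,
    Set.inter_comm]

lemma domNum_eq_add_domNum_induce_compl [Finite V]
    (hS : ∀ ⦃u v⦄, G.Adj u v → (u ∈ S ↔ v ∈ S)) :
    domNum G = domNum (G.induce S) + domNum (G.induce Sᶜ) := by
  refine le_antisymm domNum_le_add_domNum_induce_compl ?_
  obtain ⟨D, hD, hcard⟩ := exists_isGammaSet G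
  have hScompl : ∀ ⦃u v⦄, G.Adj u v → (u ∈ Sᶜ ↔ v ∈ Sᶜ) := fun _ _ h => (hS h).not
  calc domNum (G.induce S) + domNum (G.induce Sᶜ)
      ≤ (Subtype.val ⁻¹' D : Set S).ncard + (Subtype.val ⁻¹' D : Set ↥Sᶜ).ncard :=
        add_le_add (domNum_le_ncard (hD.preimage_val hS))
          (domNum_le_ncard (hD.preimage_val hScompl))
    _ = D.ncard := by
      rw [ncard_preimage_val, ncard_preimage_val, ← Set.sdiff_eq,
        Set.ncard_inter_add_ncard_sdiff_eq_ncard D S (Set.toFinite D)]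
    _ = domNum G := hcard

end UnionOfComponents

-- `Sum.elim id id ⁻¹' S` is the union of the two copies of `S` in `V ⊕ V`.
lemma prism_mem_preimage_congr_adj {G : SimpleGraph V} {π : Equiv.Perm V} {S : Set V}
    (hS : ∀ ⦃u v⦄, G.Adj u v → (u ∈ S ↔ v ∈ S)) (hπ : ∀ v, π v ∈ S ↔ v ∈ S) :
    ∀ ⦃x y⦄, (prism G π).Adj x y → (x ∈ Sum.elim id id ⁻¹' S ↔ y ∈ Sum.elim id id ⁻¹' S) := by
  rintro (u | u) (v | v) h
  · exact hS (prism_adj_inl_inl.1 h)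
  · obtain rfl := prism_adj_inl_inr.1 h
    exact (hπ u).symm
  · obtain rfl := prism_adj_inr_inl.1 h
    exact hπ v
  · exact hS (prism_adj_inr_inr.1 h)

def prismInduceIso (G : SimpleGraph V) (π : Equiv.Perm V) (S : Set V)
    (hπ : ∀ v, π v ∈ S ↔ v ∈ S) :
    (prism G π).induce (Sum.elim id id ⁻¹' S) ≃g prism (G.induce S) (π.subtypePerm hπ) where
  toEquiv := Equiv.subtypeSum
  map_rel_iff' := by
    rintro ⟨a | a, ha⟩ ⟨b | b, hb⟩
    · exact prism_adj_inl_inl.trans (prism_adj_inl_inl (G := G) (π := π)).symm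
    · exact prism_adj_inl_inr.trans (Subtype.ext_iff.trans (prism_adj_inl_inr (G := G)).symm)
    · exact prism_adj_inr_inl.trans (Subtype.ext_iff.trans (prism_adj_inr_inl (G := G)).symm)
    · exact prism_adj_inr_inr.trans (prism_adj_inr_inr (G := G) (π := π)).symm

/-- Extend `π` by the identity to a permutation `σ` of `V`. Both `G` and `σG` split along `S`, so
`γ(πG[S]) + γ(σG[Sᶜ]) = γ(σG) = γ(G) = γ(G[S]) + γ(G[Sᶜ])`, and neither prism summand can be
smaller than the corresponding summand on the right. -/
lemma IsUniversalFixer.induce [Finite V] {G : SimpleGraph V} (hG : IsUniversalFixer G)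
    {S : Set V} (hS : ∀ ⦃u v⦄, G.Adj u v → (u ∈ S ↔ v ∈ S)) :
    IsUniversalFixer (G.induce S) := by
  classical
  intro π
  set σ : Equiv.Perm V := Equiv.Perm.ofSubtype π
  have hσS : ∀ v, σ v ∈ S ↔ v ∈ S := Equiv.Perm.ofSubtype_apply_mem_iff_mem π
  have hσSc : ∀ v, σ v ∈ Sᶜ ↔ v ∈ Sᶜ := fun v => (hσS v).not
  have hsplit :
      domNum (prism (G.induce S) π) + domNum (prism (G.induce Sᶜ) (σ.subtypePerm hσSc)) =
        domNum (G.induce S) + domNum (G.induce Sᶜ) :=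
    calc _ = domNum (prism G σ) := by
          rw [domNum_eq_add_domNum_induce_compl (prism_mem_preimage_congr_adj hS hσS),
            ← Set.preimage_compl, domNum_congr (prismInduceIso G σ S hσS),
            domNum_congr (prismInduceIso G σ Sᶜ hσSc), Equiv.Perm.subtypePerm_ofSubtype]
      _ = domNum G := hG σ
      _ = _ := domNum_eq_add_domNum_induce_compl hS
  have := domNum_le_domNum_prism (G.induce S) π
  have := domNum_le_domNum_prism (G.induce Sᶜ) (σ.subtypePerm hσSc)
  omega

theorem stmt_2_general [Fintype V] (G : SimpleGraph V)
    (hUF : IsUniversalFixer G) :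
    ∀ c : G.ConnectedComponent, IsUniversalFixer (G.induce c.supp) :=
  fun c => hUF.induce fun _ _ h => c.mem_supp_congr_adj h

theorem stmt_2 [Fintype V] (G : SimpleGraph V) (hdisc : ¬ G.Connected)
    (hedge : ∃ u v, G.Adj u v) (hUF : IsUniversalFixer G) :
    ∀ c : G.ConnectedComponent, IsUniversalFixer (G.induce c.supp) :=
  stmt_2_general G hUF
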